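/- Let $K$ be a group, $k$ a natural number, and let $C$ and $F$ be subgroups of $K$ such that $C$ is contained in the $k$-th term $Z_k(K)$ of the upper central series of $K$ and $C \sqcup F = K$ (so $K = CF$, since $C$ is contained in a normal subgroup of $K$). Then $\gamma_{k+1}(K) = \gamma_{k+1}(F)$; precisely, `lowerCentralSeries K k` equals the image of `lowerCentralSeries F k` under the inclusion map $F \hookrightarrow K$. -/

import Mathlib

/-!
Inducting on `i`, one shows `γ_{i+1}(F Z_{m+i}) ≤ γ_{i+1}(F) Z_m` for every `m`: in the commutator
`[γ_{i+1}(F) Z_{m+1}, F Z_{m+i+1}]` the factor `Z_{m+1}` is central modulo `Z_m`, and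
`[γ_{i+1}(F), Z_{m+i+1}] ≤ [γ_{i+1}(K), Z_{m+i+1}] ≤ Z_m` by the three subgroups lemma. Since
`K = F Z_k`, the case `m = 0`, `i = k` gives `γ_{k+1}(K) ≤ γ_{k+1}(F)`.
-/

open scoped commutatorElement Pointwise

namespace Subgroup

variable {G : Type*} [Group G]

theorem commutator_commutator_le_of_rotate {N H₁ H₂ H₃ : Subgroup G} [N.Normal]
    (h₁ : ⁅⁅H₂, H₃⁆, H₁⁆ ≤ N) (h₂ : ⁅⁅H₃, H₁⁆, H₂⁆ ≤ N) : ⁅⁅H₁, H₂⁆, H₃⁆ ≤ N := by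
  have map_eq_bot_iff_le {H : Subgroup G} : H.map (QuotientGroup.mk' N) = ⊥ ↔ H ≤ N := by
    rw [map_eq_bot_iff, QuotientGroup.ker_mk']
  simp only [← map_eq_bot_iff_le, map_commutator] at h₁ h₂ ⊢
  exact commutator_commutator_eq_bot_of_rotate h₁ h₂

theorem commutator_sup_sup_le {N A B C D : Subgroup G} [N.Normal] [B.Normal] [D.Normal]
    (hB : ⁅B, C ⊔ D⁆ ≤ N) (hD : ⁅A, D⁆ ≤ N) : ⁅A ⊔ B, C ⊔ D⁆ ≤ ⁅A, C⁆ ⊔ N := by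
  rw [commutator_le]
  intro x hx y hy
  obtain ⟨a, ha, b, hb, rfl⟩ : x ∈ (A : Set G) * (B : Set G) := by rwa [← mul_normal]
  obtain ⟨c, hc, d, hd, rfl⟩ : y ∈ (C : Set G) * (D : Set G) := by rwa [← mul_normal]
  have hbN : ⁅b, c * d⁆ ∈ N := hB (commutator_mem_commutator hb hy)
  have hadN : ⁅a, d⁆ ∈ N := hD (commutator_mem_commutator ha hd)
  have expand : ⁅a * b, c * d⁆ = a * ⁅b, c * d⁆ * a⁻¹ * ⁅a, c⁆ * (c * ⁅a, d⁆ * c⁻¹) := by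
    simp only [commutatorElement_def]; group
  show ⁅a * b, c * d⁆ ∈ _
  rw [expand]
  exact mul_mem (mul_mem (mem_sup_right (‹N.Normal›.conj_mem _ hbN a))
    (mem_sup_left (commutator_mem_commutator ha hc))) (mem_sup_right (‹N.Normal›.conj_mem _ hadN c))

theorem commutator_lowerCentralSeries_upperCentralSeries_le (i m : ℕ) :
    ⁅(⊤ : Subgroup G).lowerCentralSeries i, upperCentralSeries G (m + i + 1)⁆ ≤
      upperCentralSeries G m := by
  induction i generalizing m with
  | zero => rw [commutator_comm]; exact commutator_upperCentralSeries_top_le G m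
  | succ i ih =>
    apply commutator_commutator_le_of_rotate
    · calc ⁅⁅⊤, upperCentralSeries G (m + (i + 1) + 1)⁆, (⊤ : Subgroup G).lowerCentralSeries i⁆
          ≤ ⁅upperCentralSeries G (m + i + 1), (⊤ : Subgroup G).lowerCentralSeries i⁆ := by
            refine commutator_mono ?_ le_rfl
            rw [commutator_comm]
            exact commutator_upperCentralSeries_top_le G _
        _ ≤ upperCentralSeries G m := by rw [commutator_comm]; exact ih m
    · calc ⁅⁅upperCentralSeries G (m + (i + 1) + 1), (⊤ : Subgroup G).lowerCentralSeries i⁆, ⊤⁆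
          ≤ ⁅upperCentralSeries G (m + 1), ⊤⁆ := by
            refine commutator_mono ?_ le_rfl
            rw [commutator_comm, ← add_right_comm m]
            exact ih (m + 1)
        _ ≤ upperCentralSeries G m := commutator_upperCentralSeries_top_le G m

theorem lowerCentralSeries_sup_upperCentralSeries_le (F : Subgroup G) (i m : ℕ) :
    (F ⊔ upperCentralSeries G (m + i)).lowerCentralSeries i ≤
      F.lowerCentralSeries i ⊔ upperCentralSeries G m := by
  induction i generalizing m with
  | zero => exact le_rfl
  | succ i ih =>
    have hlcs : (F ⊔ upperCentralSeries G (m + (i + 1))).lowerCentralSeries i ≤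
        F.lowerCentralSeries i ⊔ upperCentralSeries G (m + 1) := by
      rw [← add_assoc, add_right_comm]; exact ih (m + 1)
    refine (commutator_mono hlcs le_rfl).trans (commutator_sup_sup_le ?_ ?_)
    · exact (commutator_mono le_rfl le_top).trans (commutator_upperCentralSeries_top_le G m)
    · exact (commutator_mono (lowerCentralSeries_mono i le_top) le_rfl).trans
        (commutator_lowerCentralSeries_upperCentralSeries_le i m)

end Subgroup

/-- Hekster's Lemma 2.4: if `C ≤ Z_k(K)` and `C ⊔ F = K`, then
`γ_{k+1}(K) = γ_{k+1}(F)` (the latter viewed inside `K`). -/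
theorem lowerCentralSeries_eq_map_of_sup_eq_top
    (K : Type*) [Group K] (k : ℕ) (C F : Subgroup K)
    (hC : C ≤ Subgroup.upperCentralSeries K k) (hCF : C ⊔ F = ⊤) :
    (⊤ : Subgroup K).lowerCentralSeries k = Subgroup.map F.subtype ((⊤ : Subgroup F).lowerCentralSeries k) := by
  rw [Subgroup.top_subtype_lowerCentralSeries]
  have htop : F ⊔ Subgroup.upperCentralSeries K k = ⊤ := by
    rw [eq_top_iff, ← hCF, sup_comm]
    exact sup_le_sup_left hC F
  refine le_antisymm ?_ (Subgroup.lowerCentralSeries_mono k le_top)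
  simpa [htop] using Subgroup.lowerCentralSeries_sup_upperCentralSeries_le F k 0
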